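/- Let S ⊆ ℤ be such that S ∪ (−S) generates ℤ, and let d_S be the associated word metric on ℤ. If there exists δ ≥ 0 such that (ℤ, d_S) is δ-hyperbolic, then either S is finite, or ℤ has finite diameter with respect to d_S. -/

import Mathlib

/-- Word metric on ℤ associated to a subset `S ⊆ ℤ`: the least `k` such that `n − m` is a
sum of `k` elements of `S ∪ (−S)`. -/
noncomputable def wordDistZ (S : Set ℤ) (m n : ℤ) : ℕ :=
  sInf {k : ℕ | ∃ l : List ℤ, l.length = k ∧ (∀ x ∈ l, x ∈ S ∨ -x ∈ S) ∧ n - m = l.sum}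

/-- Gromov product for the word metric on ℤ. -/
noncomputable def gpZ (S : Set ℤ) (x y w : ℤ) : ℝ :=
  ((wordDistZ S x w : ℝ) + (wordDistZ S y w : ℝ) - (wordDistZ S x y : ℝ)) / 2

/-!
Write `‖y‖ = d_S(0, y)`. If the diameter is infinite, pick `x` with `‖x‖ > 6δ + 2`. The sides
`[0, x]` and `[x, 2x]` of the triangle `0, x, 2x` are translates of each other, and thinness forces
`(2x, 0)_x ≤ 2δ + 1`; the four-point condition at the points `kx` then makes `k ↦ kx` a
quasi-geodesic, `‖kx‖ ≥ |k| (‖x‖ - 6δ - 2)`. Writing `s ∈ S` as `qx + r` with `0 ≤ r < |x|` gives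
`‖qx‖ ≤ 1 + max ‖r‖`, so `q`, and hence `s`, takes finitely many values.
-/

namespace IntWordMetric

noncomputable def wordLength (S : Set ℤ) (x : ℤ) : ℕ := wordDistZ S 0 x

variable {S : Set ℤ}

theorem wordDistZ_eq_wordLength_sub (m n : ℤ) : wordDistZ S m n = wordLength S (n - m) := by
  simp only [wordDistZ, wordLength, sub_zero]

theorem gpZ_eq (x y w : ℤ) :
    gpZ S x y w =
      ((wordLength S (w - x) : ℝ) + wordLength S (w - y) - wordLength S (y - x)) / 2 := by
  simp only [gpZ, wordDistZ_eq_wordLength_sub]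

theorem wordLength_le_length {x : ℤ} {l : List ℤ} (hl : ∀ a ∈ l, a ∈ S ∨ -a ∈ S)
    (hx : l.sum = x) : wordLength S x ≤ l.length :=
  Nat.sInf_le ⟨l, rfl, hl, by simp [hx]⟩

theorem wordLength_zero : wordLength S 0 = 0 :=
  Nat.le_zero.mp (wordLength_le_length (l := []) (by simp) rfl)

theorem wordLength_le_one_of_mem {s : ℤ} (hs : s ∈ S) : wordLength S s ≤ 1 :=
  wordLength_le_length (l := [s]) (by simpa using Or.inl hs) (by simp)

theorem wordLength_neg_le_of_sum_eq {x : ℤ} {l : List ℤ} (hl : ∀ a ∈ l, a ∈ S ∨ -a ∈ S)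
    (hx : l.sum = x) : wordLength S (-x) ≤ l.length := by
  refine (wordLength_le_length (l := l.map (- ·)) ?_ (by rw [← List.sum_neg, hx])).trans_eq
    (List.length_map _)
  intro a ha
  obtain ⟨b, hb, rfl⟩ := List.mem_map.mp ha
  simpa [or_comm] using hl b hb

theorem wordLength_sum_take_sub_add_le {l : List ℤ} (hl : ∀ a ∈ l, a ∈ S ∨ -a ∈ S) {j k : ℕ}
    (hjk : j ≤ k) : wordLength S ((l.take k).sum - (l.take j).sum) + j ≤ k := by
  have hsplit := List.sum_take_add_sum_drop (l.take k) j
  rw [List.take_take, min_eq_left hjk] at hsplit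
  have h := wordLength_le_length (S := S) (x := (l.take k).sum - (l.take j).sum)
    (l := (l.take k).drop j)
    (fun a ha ↦ hl a (List.mem_of_mem_take (List.mem_of_mem_drop ha))) (by linarith)
  simp only [List.length_drop, List.length_take] at h
  omega

section Generating

variable (hgen : ∀ n : ℤ, ∃ l : List ℤ, (∀ x ∈ l, x ∈ S ∨ -x ∈ S) ∧ n = l.sum)
include hgen

theorem exists_list_length_eq_wordLength (x : ℤ) :
    ∃ l : List ℤ, (∀ a ∈ l, a ∈ S ∨ -a ∈ S) ∧ l.sum = x ∧ l.length = wordLength S x := by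
  obtain ⟨l, hl, hx⟩ := hgen x
  obtain ⟨l', hlen, hl', hx'⟩ := Nat.sInf_mem (s := {k : ℕ | ∃ l : List ℤ, l.length = k ∧
    (∀ a ∈ l, a ∈ S ∨ -a ∈ S) ∧ x - 0 = l.sum}) ⟨l.length, l, rfl, hl, by simp [hx]⟩
  exact ⟨l', hl', by simp [← hx'], hlen⟩

theorem wordLength_neg (x : ℤ) : wordLength S (-x) = wordLength S x := by
  have key : ∀ y : ℤ, wordLength S (-y) ≤ wordLength S y := fun y ↦ by
    obtain ⟨l, hl, hy, hlen⟩ := exists_list_length_eq_wordLength hgen y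
    exact hlen ▸ wordLength_neg_le_of_sum_eq hl hy
  exact le_antisymm (key x) (by simpa using key (-x))

theorem wordLength_add_le (x y : ℤ) : wordLength S (x + y) ≤ wordLength S x + wordLength S y := by
  obtain ⟨l, hl, hx, hlen⟩ := exists_list_length_eq_wordLength hgen x
  obtain ⟨l', hl', hy, hlen'⟩ := exists_list_length_eq_wordLength hgen y
  simpa [hlen, hlen'] using wordLength_le_length (l := l ++ l')
    (by simpa [or_imp, forall_and] using And.intro hl hl') (by simp [hx, hy])

theorem gpZ_nonneg (x y w : ℤ) : 0 ≤ gpZ S x y w := by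
  have h := wordLength_add_le hgen (w - x) (y - w)
  rw [show w - x + (y - w) = y - x by ring, ← neg_sub w y, wordLength_neg hgen] at h
  rw [gpZ_eq]
  have h' : (wordLength S (y - x) : ℝ) ≤ wordLength S (w - x) + wordLength S (w - y) := by
    exact_mod_cast h
  linarith

theorem wordLength_sum_take_of_length_eq {x : ℤ} {l : List ℤ}
    (hl : ∀ a ∈ l, a ∈ S ∨ -a ∈ S) (hx : l.sum = x) (hlen : l.length = wordLength S x)
    {i : ℕ} (hi : i ≤ wordLength S x) :
    wordLength S (l.take i).sum = i ∧ wordLength S (x - (l.take i).sum) + i = wordLength S x := by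
  have hstart := wordLength_sum_take_sub_add_le hl (Nat.zero_le i)
  have hend := wordLength_sum_take_sub_add_le hl hi
  have hsub := wordLength_add_le hgen (l.take i).sum (x - (l.take i).sum)
  rw [← hlen, List.take_length, hx] at hend
  simp only [List.take_zero, List.sum_nil, sub_zero, add_zero] at hstart
  rw [add_sub_cancel] at hsub
  omega

theorem finite_setOf_wordLength_le {x : ℤ} {ε : ℝ} (hε : 0 < ε)
    (hgrowth : ∀ q : ℤ, q.natAbs * ε ≤ wordLength S (q * x)) (C : ℕ) :
    {y | wordLength S y ≤ C}.Finite := by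
  have hx : x ≠ 0 := by
    rintro rfl
    simpa [wordLength_zero, hε.not_ge] using hgrowth 1
  obtain ⟨R, hR⟩ := ((Set.finite_Ico 0 |x|).image (wordLength S)).bddAbove
  set K := ⌊(C + R) / ε⌋₊
  refine (Set.finite_Icc (-(|x| * (K + 1))) (|x| * (K + 1))).subset
    fun y (hy : wordLength S y ≤ C) ↦ ?_
  set q := y / x
  set r := y % x
  have hyqr : x * q + r = y := Int.mul_ediv_add_emod y x
  have hr0 : 0 ≤ r := Int.emod_nonneg y hx
  have hrx : r < |x| := Int.emod_lt_abs y hx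
  have hNr : wordLength S r ≤ R := hR ⟨r, ⟨hr0, hrx⟩, rfl⟩
  have hNqx : wordLength S (q * x) ≤ C + R := by
    have := wordLength_add_le hgen y (-r)
    rw [wordLength_neg hgen, show y + -r = q * x by rw [← hyqr]; ring] at this
    omega
  have hqK : q.natAbs ≤ K := by
    refine Nat.le_floor ((le_div_iff₀ hε).mpr ((hgrowth q).trans ?_))
    exact_mod_cast hNqx
  have hq : |q| ≤ K := by rw [← Int.natCast_natAbs]; exact_mod_cast hqK
  have hyK : |y| ≤ |x| * (K + 1) := by
    calc |y| = |x * q + r| := by rw [hyqr]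
      _ ≤ |x * q| + |r| := abs_add_le _ _
      _ = |x| * |q| + r := by rw [abs_mul, abs_of_nonneg hr0]
      _ ≤ |x| * K + |x| := by gcongr
      _ = |x| * (K + 1) := by ring
  exact abs_le.mp hyK

section Hyperbolic

variable {δ : ℝ} (hδ : 0 ≤ δ)
  (hhyp : ∀ x y z w : ℤ, min (gpZ S x z w) (gpZ S y z w) - δ ≤ gpZ S x y w)
include hδ hhyp

/-- Points `a` on a geodesic `[0, x]` and `b` on its translate `[x, 2x]`, both at distance `j`
from `x`, are `4δ`-close by thinness; since `ℤ` is abelian, `x - (b - a)` is the middle piece of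
`[0, x]`, of length `‖x‖ - 2j`, so `‖x‖ ≤ 4δ + ‖x‖ - 2j`. -/
theorem le_two_mul_of_le_gpZ_two_mul {x : ℤ} {j : ℕ}
    (hj : (j : ℝ) ≤ gpZ S (2 * x) 0 x) (hjm : 2 * j ≤ wordLength S x) : (j : ℝ) ≤ 2 * δ := by
  obtain ⟨l, hl, hx, hlen⟩ := exists_list_length_eq_wordLength hgen x
  obtain ⟨hpj, hxpj⟩ := wordLength_sum_take_of_length_eq hgen hl hx hlen (i := j) (by omega)
  obtain ⟨hpmj, hxpmj⟩ :=
    wordLength_sum_take_of_length_eq hgen hl hx hlen (i := wordLength S x - j) (by omega)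
  have hmid := wordLength_sum_take_sub_add_le (S := S) hl (show j ≤ wordLength S x - j by omega)
  set m := wordLength S x
  set a := (l.take (m - j)).sum
  set pj := (l.take j).sum
  set b := x + pj
  have hneg := wordLength_neg hgen
  have hxa : (wordLength S (x - a) : ℝ) = j := by
    exact_mod_cast (by omega : wordLength S (x - a) = j)
  have hxb : (wordLength S (x - b) : ℝ) = j := by
    rw [show x - b = -pj by ring, hneg]
    exact_mod_cast hpj
  have hga : gpZ S a 0 x = j := by
    rw [gpZ_eq, sub_zero, zero_sub, hneg, hxa]
    have : (wordLength S a : ℝ) + j = m := by exact_mod_cast (by omega : wordLength S a + j = m)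
    linarith
  have hgb : gpZ S b (2 * x) x = j := by
    rw [gpZ_eq, hxb, show x - 2 * x = -x by ring, hneg, show 2 * x - b = x - pj by ring]
    have : (wordLength S (x - pj) : ℝ) + j = m := by exact_mod_cast hxpj
    linarith
  have hga2x : (j : ℝ) - δ ≤ gpZ S a (2 * x) x := by
    simpa [hga, hj] using hhyp a (2 * x) 0 x
  have hgab : (j : ℝ) - 2 * δ ≤ gpZ S a b x := by
    have := hhyp a b (2 * x) x
    rw [hgb] at this
    have := le_min hga2x (by linarith : (j : ℝ) - δ ≤ j)
    linarith
  have hba : (wordLength S (b - a) : ℝ) ≤ 4 * δ := by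
    rw [gpZ_eq, hxa, hxb] at hgab
    linarith
  have htri := wordLength_add_le hgen (b - a) (a - pj)
  rw [show b - a + (a - pj) = x by ring] at htri
  have : (m : ℝ) + 2 * j ≤ wordLength S (b - a) + m := by
    exact_mod_cast (by omega : m + 2 * j ≤ wordLength S (b - a) + m)
  linarith

theorem gpZ_two_mul_le {x : ℤ} (hx : 4 * δ + 2 < wordLength S x) :
    gpZ S (2 * x) 0 x ≤ 2 * δ + 1 := by
  by_contra! hB
  set t := min (gpZ S (2 * x) 0 x) ((wordLength S x : ℝ) / 2)
  have ht : 2 * δ + 1 < t := lt_min hB (by linarith)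
  have hjt : (⌊t⌋₊ : ℝ) ≤ t := Nat.floor_le (by linarith)
  have hjB : (⌊t⌋₊ : ℝ) ≤ gpZ S (2 * x) 0 x := hjt.trans (min_le_left _ _)
  have hjm : 2 * ⌊t⌋₊ ≤ wordLength S x := by
    have : (⌊t⌋₊ : ℝ) ≤ wordLength S x / 2 := hjt.trans (min_le_right _ _)
    exact_mod_cast (by linarith : (2 * ⌊t⌋₊ : ℝ) ≤ wordLength S x)
  linarith [le_two_mul_of_le_gpZ_two_mul hgen hδ hhyp hjB hjm, Nat.lt_floor_add_one t]

/-- With `c := ‖x‖ - 2 (2x, 0)_x - 2δ > 0`, the four-point condition at `(k+1)x` for the points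
`kx`, `(k+2)x`, `0` propagates the increment bound `c ≤ ‖(k+1)x‖ - ‖kx‖` from `k` to `k + 1`. -/
theorem natCast_mul_le_wordLength_mul {x : ℤ}
    (hc : 0 < (wordLength S x : ℝ) - 2 * gpZ S (2 * x) 0 x - 2 * δ) (q : ℕ) :
    q * ((wordLength S x : ℝ) - 2 * gpZ S (2 * x) 0 x - 2 * δ) ≤ wordLength S (q * x) := by
  set B := gpZ S (2 * x) 0 x
  set m : ℝ := (wordLength S x : ℝ)
  set D : ℤ → ℝ := fun k ↦ (wordLength S (k * x) : ℝ)
  have hneg := wordLength_neg hgen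
  have hB0 : 0 ≤ B := gpZ_nonneg hgen _ _ _
  have hgp : ∀ k l n : ℤ, gpZ S (k * x) (l * x) (n * x) =
      (D (n - k) + D (n - l) - D (l - k)) / 2 := fun k l n ↦ by
    simp only [gpZ_eq, D, sub_mul]
  have hD1 : D 1 = m := by simp [D, m]
  have hDneg : ∀ k, D (-k) = D k := fun k ↦ by simp [D, neg_mul, hneg]
  have hB : B = (2 * m - D 2) / 2 := by
    have := hgp 2 0 1
    simp only [zero_mul, one_mul] at this
    rw [show B = _ from this]
    norm_num [hDneg, hD1]
    ring
  have hstep : ∀ k : ℕ, m - 2 * B - 2 * δ ≤ D (k + 1) - D k := by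
    intro k
    induction k with
    | zero =>
      have hD0 : D 0 = 0 := by simp [D, wordLength_zero]
      simp only [Nat.cast_zero, zero_add, hD1, hD0]
      linarith
    | succ k ih =>
      have key := hhyp (k * x) ((k + 2) * x) 0 ((k + 1) * x)
      rw [← zero_mul x, hgp, hgp, hgp] at key
      simp only [sub_zero, zero_sub, hDneg, show (k : ℤ) + 1 - k = 1 by ring,
        show (k : ℤ) + 1 - (k + 2) = -1 by ring, show (k : ℤ) + 2 - k = 2 by ring, hD1] at key
      rw [sub_le_iff_le_add, min_le_iff] at key
      push_cast
      rcases key with h | h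
      · linarith
      · rw [show (k : ℤ) + 1 + 1 = k + 2 by ring]
        linarith
  induction q with
  | zero => simp
  | succ q ih =>
    have := hstep q
    push_cast at ih ⊢
    rw [add_mul]
    linarith

theorem natAbs_mul_le_wordLength_mul {x : ℤ} (hx : 6 * δ + 2 < wordLength S x)
    (q : ℤ) : q.natAbs * ((wordLength S x : ℝ) - 6 * δ - 2) ≤ wordLength S (q * x) := by
  have hB := gpZ_two_mul_le hgen hδ hhyp (x := x) (by linarith)
  have hgrowth := natCast_mul_le_wordLength_mul hgen hδ hhyp (x := x) (by linarith) q.natAbs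
  have hq : wordLength S (q.natAbs * x) = wordLength S (q * x) := by
    rcases Int.natAbs_eq q with h | h
    · rw [← h]
    · conv_rhs => rw [h]
      rw [neg_mul, wordLength_neg hgen]
  rw [hq] at hgrowth
  exact le_trans (mul_le_mul_of_nonneg_left (by linarith) (Nat.cast_nonneg _)) hgrowth

end Hyperbolic

end Generating

end IntWordMetric

theorem stmt_5 (S : Set ℤ)
    -- S ∪ (−S) generates ℤ
    (hgen : ∀ n : ℤ, ∃ l : List ℤ, (∀ x ∈ l, x ∈ S ∨ -x ∈ S) ∧ n = l.sum)
    (δ : ℝ) (hδ : 0 ≤ δ)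
    -- (ℤ, d_S) is δ-hyperbolic
    (hhyp : ∀ x y z w : ℤ, min (gpZ S x z w) (gpZ S y z w) - δ ≤ gpZ S x y w) :
    S.Finite ∨ ∃ D : ℝ, ∀ m n : ℤ, (wordDistZ S m n : ℝ) ≤ D := by
  by_contra! h
  obtain ⟨hS, hdiam⟩ := h
  obtain ⟨m, n, hmn⟩ := hdiam (6 * δ + 2)
  rw [IntWordMetric.wordDistZ_eq_wordLength_sub] at hmn
  have hgrowth := IntWordMetric.natAbs_mul_le_wordLength_mul hgen hδ hhyp hmn
  exact hS ((IntWordMetric.finite_setOf_wordLength_le hgen (by linarith) hgrowth 1).subset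
    fun _ ↦ IntWordMetric.wordLength_le_one_of_mem)
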